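/- For every real number e with 0 ≤ e ≤ 1/2 there exists a closed subset E of ∂T such that cap^T(E) = e. -/

import Mathlib

open scoped ENNReal NNReal
open Filter Topology

noncomputable section

/-- The vertex set of the dyadic tree `T`: finite binary strings. The boundary `∂T`
is the set of infinite binary sequences `ℕ → Bool`. `pre ζ k` is the prefix of
length `k` of the boundary point `ζ`. -/
def pre (ζ : ℕ → Bool) (k : ℕ) : List Bool := List.ofFn (fun i : Fin k => ζ i)

/-- The tree condenser capacity `cap^T_n(E)`: the infimum of `Σ_x φ(x)²` over
`φ : T → [0,∞)` with `Iφ(ζ) = Σ_{x ∈ P(ζ)} φ(x) ≥ 1` on `E` and `φ(x) = 0`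
whenever `d(x) ≤ n-1`.  For `n = 0` this is the tree capacity `cap^T(E)`. -/
noncomputable def treeCapN (n : ℕ) (E : Set (ℕ → Bool)) : ℝ≥0∞ :=
  sInf { c | ∃ φ : List Bool → ℝ≥0,
    (∀ ζ ∈ E, 1 ≤ ∑' k : ℕ, (φ (pre ζ k) : ℝ≥0∞)) ∧
    (∀ x : List Bool, x.length < n → φ x = 0) ∧
    c = ∑' x : List Bool, (φ x : ℝ≥0∞) ^ 2 }

/-- The tree capacity `cap^T(E)` of a set `E ⊆ ∂T`. -/
noncomputable def treeCap (E : Set (ℕ → Bool)) : ℝ≥0∞ := treeCapN 0 E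

/-!
For `s : ℕ → Bool`, `branchingSet s` is the boundary of the spherically symmetric subtree that
branches exactly at the levels `i` with `s i`. The uniform unit flow `flow s` through it gives each
vertex of level `k` the mass `levelWeight s k`, so `∑ₓ (flow s x)² = ∑ₖ levelWeight s k =: R`.
Hence `flow s / R` is admissible with energy `1 / R`. Conversely, for admissible `φ` a greedy path,
always entering the child with the smaller flow-weighted sum of `φ`, shows `∑ₓ flow s x * φ x ≥ 1`,
and Cauchy–Schwarz gives `∑ₓ φ x ² ≥ 1 / R`. So the capacity is `1 / R`.

Every `R ∈ [2, ∞)` occurs: branch exactly when the part of `R` not yet summed drops below three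
times the current level weight. That remainder then stays between 2 and `max R 4` times the level
weight, and the level weights are summable, so it tends to `0`. Take `R = 1 / e`, and `∅` for
`e = 0`.
-/

lemma ENNReal.tsum_list {α : Type*} (F : List α → ℝ≥0∞) :
    ∑' x, F x = F [] + ∑' a, ∑' t, F (a :: t) := by
  have hcons : Function.Injective (fun p : α × List α => p.1 :: p.2) := by
    rintro ⟨a, t⟩ ⟨b, u⟩ h
    simp_all
  rw [ENNReal.tsum_eq_add_tsum_ite [], ← ENNReal.tsum_prod (f := fun a t => F (a :: t)),
    ← hcons.tsum_eq]
  · simp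
  · rintro (_ | ⟨a, t⟩) hx
    · simp at hx
    · exact ⟨(a, t), rfl⟩

lemma ENNReal.tsum_mul_sq_le_sq_mul_sq {ι : Type*} (f g : ι → ℝ≥0∞) :
    (∑' i, f i * g i) ^ 2 ≤ (∑' i, f i ^ 2) * ∑' i, g i ^ 2 := by
  have holder : ∑' i, f i * g i ≤
      (∑' i, f i ^ 2) ^ (1 / 2 : ℝ) * (∑' i, g i ^ 2) ^ (1 / 2 : ℝ) := by
    refine ENNReal.summable.tsum_le_of_sum_le fun A => ?_
    have := ENNReal.inner_le_Lp_mul_Lq A f g Real.HolderConjugate.two_two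
    simp only [ENNReal.rpow_two] at this
    refine this.trans ?_
    gcongr <;> exact ENNReal.sum_le_tsum A
  calc (∑' i, f i * g i) ^ 2
      ≤ ((∑' i, f i ^ 2) ^ (1 / 2 : ℝ) * (∑' i, g i ^ 2) ^ (1 / 2 : ℝ)) ^ 2 := by gcongr
    _ = (∑' i, f i ^ 2) * ∑' i, g i ^ 2 := by
      rw [mul_pow, ← ENNReal.rpow_natCast, ← ENNReal.rpow_natCast (_ ^ _), ← ENNReal.rpow_mul,
        ← ENNReal.rpow_mul]
      norm_num

namespace DyadicTree

def tail (s : ℕ → Bool) : ℕ → Bool := fun i => s (i + 1)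

lemma pre_succ_eq_cons (ζ : ℕ → Bool) (k : ℕ) : pre ζ (k + 1) = ζ 0 :: pre (tail ζ) k := by
  simp [pre, List.ofFn_succ, tail]

def branchingSet (s : ℕ → Bool) : Set (ℕ → Bool) := {ζ | ∀ i, s i = false → ζ i = false}

lemma isClosed_branchingSet (s : ℕ → Bool) : IsClosed (branchingSet s) := by
  simp only [branchingSet, Set.ofPred_forall]
  exact isClosed_iInter fun i => isClosed_iInter fun _ =>
    isClosed_eq (continuous_apply i) continuous_const

def branchFactor (b a : Bool) : ℝ≥0∞ := if b then 2⁻¹ else if a then 0 else 1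

lemma tsum_branchFactor (b : Bool) : ∑' a, branchFactor b a = 1 := by
  rw [tsum_bool]
  cases b <;> simp [branchFactor, ENNReal.inv_two_add_inv_two]

def flow : (ℕ → Bool) → List Bool → ℝ≥0∞
  | _, [] => 1
  | s, a :: t => branchFactor (s 0) a * flow (tail s) t

def levelWeight (s : ℕ → Bool) (k : ℕ) : ℝ≥0∞ := ∏ i ∈ Finset.range k, if s i then 2⁻¹ else 1

def resistance (s : ℕ → Bool) : ℝ≥0∞ := ∑' k, levelWeight s k

lemma levelWeight_succ (s : ℕ → Bool) (k : ℕ) :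
    levelWeight s (k + 1) = levelWeight s k * if s k then 2⁻¹ else 1 :=
  Finset.prod_range_succ _ _

lemma levelWeight_succ' (s : ℕ → Bool) (k : ℕ) :
    levelWeight s (k + 1) = (if s 0 then 2⁻¹ else 1) * levelWeight (tail s) k := by
  rw [levelWeight, Finset.prod_range_succ', mul_comm]
  rfl

lemma one_le_resistance (s : ℕ → Bool) : 1 ≤ resistance s :=
  (ENNReal.le_tsum 0).trans_eq' (by simp [levelWeight])

lemma flow_le_one : ∀ (s : ℕ → Bool) (x : List Bool), flow s x ≤ 1
  | _, [] => le_rfl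
  | s, a :: t => by
    have hb : branchFactor (s 0) a ≤ 1 := by
      unfold branchFactor; split_ifs <;> norm_num
    rw [flow]
    exact mul_le_one' hb (flow_le_one (tail s) t)

lemma flow_sq : ∀ (s : ℕ → Bool) (x : List Bool),
    flow s x ^ 2 = levelWeight s x.length * flow s x
  | s, [] => by simp [flow, levelWeight]
  | s, a :: t => by
    have hb : branchFactor (s 0) a ^ 2 = (if s 0 then 2⁻¹ else 1) * branchFactor (s 0) a := by
      unfold branchFactor; split_ifs <;> simp [sq]
    rw [flow, List.length_cons, levelWeight_succ', mul_pow, hb, flow_sq (tail s) t]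
    ring

lemma flow_pre {s ζ : ℕ → Bool} (hζ : ζ ∈ branchingSet s) (k : ℕ) :
    flow s (pre ζ k) = levelWeight s k := by
  induction k generalizing s ζ with
  | zero => simp [pre, flow, levelWeight]
  | succ k ih =>
    have hb : branchFactor (s 0) (ζ 0) = if s 0 then 2⁻¹ else 1 := by
      cases hs : s 0 <;> simp [branchFactor, hζ 0, hs]
    rw [pre_succ_eq_cons, flow, levelWeight_succ', hb,
      ih (s := tail s) (ζ := tail ζ) fun i => hζ (i + 1)]

lemma tsum_flow_level (s : ℕ → Bool) (n : ℕ) :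
    ∑' x : List Bool, (if x.length = n then flow s x else 0) = 1 := by
  induction n generalizing s with
  | zero =>
    rw [ENNReal.tsum_list]
    simp [flow]
  | succ n ih =>
    rw [ENNReal.tsum_list]
    have hcons : ∀ a, ∑' t : List Bool,
        (if (a :: t).length = n + 1 then flow s (a :: t) else 0) = branchFactor (s 0) a := by
      intro a
      simp only [List.length_cons, Nat.add_right_cancel_iff, flow, ← mul_ite_zero,
        ENNReal.tsum_mul_left, ih, mul_one]
    simp only [hcons, tsum_branchFactor, List.length_nil]
    simp

lemma tsum_flow_sq (s : ℕ → Bool) : ∑' x, flow s x ^ 2 = resistance s := by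
  have hlevels : ∀ x : List Bool, flow s x ^ 2 =
      ∑' n, if x.length = n then levelWeight s n * flow s x else 0 := by
    intro x
    rw [flow_sq, tsum_ite_eq']
  rw [tsum_congr hlevels, ENNReal.tsum_comm, resistance]
  refine tsum_congr fun n => ?_
  simp only [← mul_ite_zero, ENNReal.tsum_mul_left, tsum_flow_level, mul_one]

lemma tsum_flow_mul (s : ℕ → Bool) (φ : List Bool → ℝ≥0∞) :
    ∑' x, flow s x * φ x =
      φ [] + ∑' a, branchFactor (s 0) a * ∑' t, flow (tail s) t * φ (a :: t) := by
  rw [ENNReal.tsum_list]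
  simp [flow, mul_assoc, ENNReal.tsum_mul_left]

lemma exists_branchFactor_ne_zero_le (b : Bool) (u : Bool → ℝ≥0∞) :
    ∃ a, branchFactor b a ≠ 0 ∧ u a ≤ ∑' a, branchFactor b a * u a := by
  rw [tsum_bool]
  cases b
  · exact ⟨false, by simp [branchFactor]⟩
  · have half : ∀ x : ℝ≥0∞, x = 2⁻¹ * x + 2⁻¹ * x := fun x => by
      rw [← add_mul, ENNReal.inv_two_add_inv_two, one_mul]
    simp only [branchFactor, if_true, ne_eq, ENNReal.inv_eq_zero, ENNReal.ofNat_ne_top,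
      not_false_eq_true, true_and]
    rcases le_total (u false) (u true) with h | h
    · exact ⟨false, (half _).trans_le (by gcongr)⟩
    · exact ⟨true, (half _).trans_le (by gcongr)⟩

def greedyChoice (s : ℕ → Bool) (φ : List Bool → ℝ≥0∞) : Bool :=
  (exists_branchFactor_ne_zero_le (s 0) fun a => ∑' t, flow (tail s) t * φ (a :: t)).choose

lemma greedyChoice_spec (s : ℕ → Bool) (φ : List Bool → ℝ≥0∞) :
    branchFactor (s 0) (greedyChoice s φ) ≠ 0 ∧
      ∑' t, flow (tail s) t * φ (greedyChoice s φ :: t) ≤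
        ∑' a, branchFactor (s 0) a * ∑' t, flow (tail s) t * φ (a :: t) :=
  (exists_branchFactor_ne_zero_le (s 0) fun a => ∑' t, flow (tail s) t * φ (a :: t)).choose_spec

def greedyPath (s : ℕ → Bool) (φ : List Bool → ℝ≥0∞) : ℕ → Bool
  | 0 => greedyChoice s φ
  | n + 1 => greedyPath (tail s) (fun t => φ (greedyChoice s φ :: t)) n

lemma greedyPath_mem_branchingSet (s : ℕ → Bool) (φ : List Bool → ℝ≥0∞) :
    greedyPath s φ ∈ branchingSet s := by
  intro i hs
  induction i generalizing s φ with
  | zero => simpa [greedyPath, branchFactor, hs] using (greedyChoice_spec s φ).1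
  | succ i ih => exact ih (tail s) _ hs

lemma sum_range_pre_greedyPath_le (s : ℕ → Bool) (φ : List Bool → ℝ≥0∞) (n : ℕ) :
    ∑ k ∈ Finset.range n, φ (pre (greedyPath s φ) k) ≤ ∑' x, flow s x * φ x := by
  induction n generalizing s φ with
  | zero => simp
  | succ n ih =>
    rw [Finset.sum_range_succ', tsum_flow_mul, add_comm]
    simp only [pre_succ_eq_cons]
    exact add_le_add (by simp [pre]) ((ih (tail s) _).trans (greedyChoice_spec s φ).2)

lemma exists_mem_branchingSet_tsum_pre_le (s : ℕ → Bool) (φ : List Bool → ℝ≥0∞) :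
    ∃ ζ ∈ branchingSet s, ∑' k, φ (pre ζ k) ≤ ∑' x, flow s x * φ x :=
  ⟨greedyPath s φ, greedyPath_mem_branchingSet s φ,
    ENNReal.tsum_le_of_sum_range_le (sum_range_pre_greedyPath_le s φ)⟩

lemma inv_resistance_le_treeCap (s : ℕ → Bool) : (resistance s)⁻¹ ≤ treeCap (branchingSet s) := by
  refine le_sInf ?_
  rintro _ ⟨φ, hφ, -, rfl⟩
  obtain ⟨ζ, hζ, hle⟩ := exists_mem_branchingSet_tsum_pre_le s fun x => φ x
  have hpair : 1 ≤ ∑' x, flow s x * φ x := (hφ ζ hζ).trans hle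
  have key : 1 ≤ resistance s * ∑' x, (φ x : ℝ≥0∞) ^ 2 :=
    calc 1 ≤ (∑' x, flow s x * φ x) ^ 2 := one_le_pow₀ hpair
      _ ≤ (∑' x, flow s x ^ 2) * ∑' x, (φ x : ℝ≥0∞) ^ 2 := ENNReal.tsum_mul_sq_le_sq_mul_sq _ _
      _ = resistance s * ∑' x, (φ x : ℝ≥0∞) ^ 2 := by rw [tsum_flow_sq]
  rcases eq_or_ne (resistance s) ⊤ with hR | hR
  · simp [hR]
  · exact (ENNReal.inv_le_iff_le_mul (fun _ => (one_pos.trans_le (one_le_resistance s)).ne')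
      (absurd · hR)).2 key

lemma treeCap_le_inv_resistance {s : ℕ → Bool} (hR : resistance s ≠ ⊤) :
    treeCap (branchingSet s) ≤ (resistance s)⁻¹ := by
  have hR0 : resistance s ≠ 0 := (one_pos.trans_le (one_le_resistance s)).ne'
  let φ : List Bool → ℝ≥0 := fun x => (flow s x * (resistance s)⁻¹).toNNReal
  have hφ (x : List Bool) : (φ x : ℝ≥0∞) = flow s x * (resistance s)⁻¹ :=
    ENNReal.coe_toNNReal (ENNReal.mul_ne_top ((flow_le_one s x).trans_lt ENNReal.one_lt_top).ne
      (ENNReal.inv_ne_top.2 hR0))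
  refine sInf_le ⟨φ, fun ζ hζ => ?_, fun x hx => absurd hx (Nat.not_lt_zero _), ?_⟩
  · simp only [hφ, flow_pre hζ, ENNReal.tsum_mul_right]
    rw [← resistance, ENNReal.mul_inv_cancel hR0 hR]
  · simp only [hφ, mul_pow, ENNReal.tsum_mul_right, tsum_flow_sq]
    rw [sq, ← mul_assoc, ENNReal.mul_inv_cancel hR0 hR, one_mul]

lemma treeCap_branchingSet {s : ℕ → Bool} (hR : resistance s ≠ ⊤) :
    treeCap (branchingSet s) = (resistance s)⁻¹ :=
  (treeCap_le_inv_resistance hR).antisymm (inv_resistance_le_treeCap s)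

-- `(weight of level k, part of r not yet summed)`
def greedyState (r : ℝ) : ℕ → ℝ × ℝ
  | 0 => (1, r)
  | k + 1 =>
    let p := greedyState r k
    (if p.2 < 3 * p.1 then p.1 / 2 else p.1, p.2 - p.1)

def greedyBranching (r : ℝ) (k : ℕ) : Bool := (greedyState r k).2 < 3 * (greedyState r k).1

section greedy

variable {r : ℝ}

lemma greedyState_succ (k : ℕ) : greedyState r (k + 1) =
    (if greedyBranching r k then (greedyState r k).1 / 2 else (greedyState r k).1,
      (greedyState r k).2 - (greedyState r k).1) := by
  simp [greedyState, greedyBranching]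

lemma greedyState_fst_pos (k : ℕ) : 0 < (greedyState r k).1 := by
  induction k with
  | zero => simp [greedyState]
  | succ k ih =>
    rw [greedyState_succ]
    split_ifs <;> positivity

lemma greedyState_bounds (hr : 2 ≤ r) (k : ℕ) :
    2 * (greedyState r k).1 ≤ (greedyState r k).2 ∧
      (greedyState r k).2 ≤ max r 4 * (greedyState r k).1 := by
  induction k with
  | zero => simp [greedyState, hr]
  | succ k ih =>
    have hv := greedyState_fst_pos (r := r) k
    have hM : 4 * (greedyState r k).1 ≤ max r 4 * (greedyState r k).1 := by gcongr; simp
    rw [greedyState_succ]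
    by_cases h : (greedyState r k).2 < 3 * (greedyState r k).1
    · simp only [greedyBranching, h, decide_true, if_true]
      constructor <;> linarith
    · simp only [greedyBranching, h, decide_false, Bool.false_eq_true, if_false]
      constructor <;> linarith

lemma sum_range_greedyState_fst (k : ℕ) :
    ∑ j ∈ Finset.range k, (greedyState r j).1 = r - (greedyState r k).2 := by
  induction k with
  | zero => simp [greedyState]
  | succ k ih =>
    rw [Finset.sum_range_succ, ih, greedyState_succ]
    ring

lemma hasSum_greedyState_fst (hr : 2 ≤ r) : HasSum (fun k => (greedyState r k).1) r := by
  have hv (k : ℕ) : 0 ≤ (greedyState r k).1 := (greedyState_fst_pos k).le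
  have ht (k : ℕ) : 0 ≤ (greedyState r k).2 :=
    (mul_nonneg zero_le_two (hv k)).trans (greedyState_bounds hr k).1
  have hsummable : Summable fun k => (greedyState r k).1 :=
    summable_of_sum_range_le hv fun k => by
      rw [sum_range_greedyState_fst]
      linarith [ht k]
  have hrem : Tendsto (fun k => (greedyState r k).2) atTop (𝓝 0) := by
    have := hsummable.tendsto_atTop_zero.const_mul (max r 4)
    rw [mul_zero] at this
    exact tendsto_of_tendsto_of_tendsto_of_le_of_le tendsto_const_nhds this ht
      fun k => (greedyState_bounds hr k).2
  rw [hasSum_iff_tendsto_nat_of_nonneg hv]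
  simp only [sum_range_greedyState_fst]
  simpa using (tendsto_const_nhds (x := r)).sub hrem

lemma levelWeight_greedyBranching (k : ℕ) :
    levelWeight (greedyBranching r) k = ENNReal.ofReal (greedyState r k).1 := by
  induction k with
  | zero => simp [levelWeight, greedyState]
  | succ k ih =>
    rw [levelWeight_succ, ih, greedyState_succ]
    split_ifs
    · rw [ENNReal.ofReal_div_of_pos two_pos, div_eq_mul_inv, ENNReal.ofReal_ofNat]
    · rw [mul_one]

end greedy

lemma exists_resistance_eq_ofReal {r : ℝ} (hr : 2 ≤ r) :
    ∃ s, resistance s = ENNReal.ofReal r := by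
  have hsum := hasSum_greedyState_fst hr
  refine ⟨greedyBranching r, ?_⟩
  simp only [resistance, levelWeight_greedyBranching]
  rw [← ENNReal.ofReal_tsum_of_nonneg (fun k => (greedyState_fst_pos k).le) hsum.summable,
    hsum.tsum_eq]

lemma treeCap_empty : treeCap ∅ = 0 :=
  nonpos_iff_eq_zero.1 <| sInf_le ⟨0, by simp, by simp, by simp⟩

end DyadicTree

theorem tree_capacity_attains_every_value (e : ℝ) (h0 : 0 ≤ e) (h1 : e ≤ 1/2) :
    ∃ E : Set (ℕ → Bool), IsClosed E ∧ treeCap E = ENNReal.ofReal e := by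
  rcases h0.eq_or_lt with rfl | he
  · exact ⟨∅, isClosed_empty, by simpa using DyadicTree.treeCap_empty⟩
  have hr : 2 ≤ e⁻¹ := by
    rw [le_inv_comm₀ two_pos he]
    linarith
  obtain ⟨s, hs⟩ := DyadicTree.exists_resistance_eq_ofReal hr
  refine ⟨DyadicTree.branchingSet s, DyadicTree.isClosed_branchingSet s, ?_⟩
  rw [DyadicTree.treeCap_branchingSet (hs ▸ ENNReal.ofReal_ne_top), hs,
    ENNReal.ofReal_inv_of_pos he, inv_inv]
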